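/- For all nonnegative integers n and all integers ℓ with ℓ > 2n, the sum over i+j=n of binomial(2i-ℓ,i)*binomial(2j+ℓ,j) equals 4^n. -/

import Mathlib

/-!
Write `W_n(a, b) = ∑_{i+j=n} C(2i+a, i) C(2j+b, j)` (`centralChooseConv n a b`). Pascal's rule
applied to the first factor gives `W_{n+1}(a+1, b) = W_{n+1}(a, b) + W_n(a+2, b)`, and by symmetry
the same recursion in `b`; by induction on `n`, `W_n(a+1, b) = W_n(a, b+1)`, so
`W_n(-ℓ, ℓ) = W_n(0, 0)` for every integer `ℓ`. Finally `C(2i, i) = (-4)^i C(-1/2, i)`, so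
Chu–Vandermonde turns `W_n(0, 0)` into `(-4)^n C(-1, n) = 4^n`.
-/

/-- Generalized binomial coefficient with real upper argument. -/
noncomputable def rchoose (x : ℝ) (k : ℕ) : ℝ :=
  (∏ j ∈ Finset.range k, (x - j)) / (Nat.factorial k : ℝ)

open Finset Polynomial

theorem rchoose_eq_choose (x : ℝ) (k : ℕ) : rchoose x k = Ring.choose x k := by
  rw [Ring.choose_eq_smul, ← aeval_eq_smeval, aeval_def, ← eval_map, descPochhammer_map,
    descPochhammer_eval_eq_prod_range, rchoose, smul_eq_mul, div_eq_inv_mul]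

namespace Ring

section BinomialRing

variable {R : Type*} [CommRing R] [BinomialRing R]

theorem choose_succ_right_eq (r : R) (k : ℕ) :
    choose r (k + 1) * (k + 1) = choose r k * (r - k) := by
  have h := descPochhammer_eq_factorial_smul_choose r (k + 1)
  rw [descPochhammer_succ_right, smeval_mul, descPochhammer_eq_factorial_smul_choose, smeval_sub,
    smeval_X, smeval_natCast] at h
  have := BinomialRing.toIsAddTorsionFree (R := R)
  rw [← nsmul_right_inj (Nat.factorial_ne_zero k)]
  simp only [nsmul_eq_mul, Nat.factorial_succ, Nat.cast_mul, npow_one, npow_zero] at h ⊢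
  push_cast at h
  linear_combination -h

theorem choose_neg_one (n : ℕ) : choose (-1 : R) n = (-1) ^ n := by
  simp [choose_neg, choose_natCast, Units.smul_def]

end BinomialRing

section Field

variable {K : Type*} [Field K] [CharZero K]

theorem choose_neg_half (n : ℕ) : choose (-(1 / 2) : K) n = (-1 / 4) ^ n * n.centralBinom := by
  induction n with
  | zero => simp
  | succ n ih =>
    have hrec : ((n : K) + 1) * (n + 1).centralBinom = 2 * (2 * n + 1) * n.centralBinom := by
      exact_mod_cast Nat.succ_mul_centralBinom_succ n
    have hstep := choose_succ_right_eq (-(1 / 2) : K) n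
    have hn : ((n : K) + 1) ≠ 0 := Nat.cast_add_one_ne_zero n
    rw [ih] at hstep
    apply mul_right_cancel₀ hn
    rw [hstep, pow_succ]
    linear_combination (-1 / 4 : K) ^ n / 4 * hrec

end Field

end Ring

theorem Nat.sum_centralBinom_mul_centralBinom (n : ℕ) :
    ∑ ij ∈ antidiagonal n, ij.1.centralBinom * ij.2.centralBinom = 4 ^ n := by
  have hcb (i : ℕ) : (i.centralBinom : ℚ) = (-4) ^ i * Ring.choose (-(1 / 2) : ℚ) i := by
    rw [Ring.choose_neg_half, ← mul_assoc, ← mul_pow]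
    norm_num
  apply Nat.cast_injective (R := ℚ)
  calc ((∑ ij ∈ antidiagonal n, ij.1.centralBinom * ij.2.centralBinom : ℕ) : ℚ)
      = (-4) ^ n * ∑ ij ∈ antidiagonal n,
          Ring.choose (-(1 / 2) : ℚ) ij.1 * Ring.choose (-(1 / 2) : ℚ) ij.2 := by
        push_cast
        rw [mul_sum]
        refine sum_congr rfl fun ij hij => ?_
        rw [hcb, hcb, ← mem_antidiagonal.mp hij, pow_add]
        ring
    _ = (-4) ^ n * Ring.choose (-1 : ℚ) n := by
        rw [← Ring.add_choose_eq _ (Commute.all _ _)]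
        norm_num
    _ = ((4 ^ n : ℕ) : ℚ) := by
        rw [Ring.choose_neg_one, ← mul_pow]
        norm_num

section CentralChooseConv

variable {R : Type*} [CommRing R] [BinomialRing R]

noncomputable def centralChooseConv (n : ℕ) (a b : R) : R :=
  ∑ ij ∈ antidiagonal n,
    Ring.choose (2 * (ij.1 : R) + a) ij.1 * Ring.choose (2 * (ij.2 : R) + b) ij.2

theorem centralChooseConv_comm (n : ℕ) (a b : R) :
    centralChooseConv n a b = centralChooseConv n b a := by
  rw [centralChooseConv, centralChooseConv, ← Nat.sum_antidiagonal_swap]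
  exact sum_congr rfl fun _ _ => mul_comm _ _

theorem centralChooseConv_succ_add_one (n : ℕ) (a b : R) :
    centralChooseConv (n + 1) (a + 1) b =
      centralChooseConv (n + 1) a b + centralChooseConv n (a + 2) b := by
  have hpascal (i : ℕ) : Ring.choose (2 * ((i + 1 : ℕ) : R) + (a + 1)) (i + 1) =
      Ring.choose (2 * ((i + 1 : ℕ) : R) + a) (i + 1) + Ring.choose (2 * (i : R) + (a + 2)) i := by
    have h : 2 * ((i + 1 : ℕ) : R) + a = 2 * (i : R) + (a + 2) := by push_cast; ring
    rw [← add_assoc, h, Ring.choose_succ_succ, add_comm]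
  simp only [centralChooseConv, Nat.sum_antidiagonal_succ, hpascal, add_mul, sum_add_distrib,
    Ring.choose_zero_right]
  ring

theorem centralChooseConv_add_one_left (n : ℕ) (a b : R) :
    centralChooseConv n (a + 1) b = centralChooseConv n a (b + 1) := by
  induction n generalizing a b with
  | zero => simp [centralChooseConv]
  | succ n ih =>
    have h2 : centralChooseConv n (a + 2) b = centralChooseConv n a (b + 2) := by
      rw [← one_add_one_eq_two, ← add_assoc, ih, ih, add_assoc]
    rw [centralChooseConv_succ_add_one, h2, centralChooseConv_comm (n + 1) a (b + 1),
      centralChooseConv_succ_add_one, centralChooseConv_comm (n + 1) b a,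
      centralChooseConv_comm n (b + 2) a]

theorem centralChooseConv_add_intCast (n : ℕ) (a b : R) (k : ℤ) :
    centralChooseConv n (a + k) b = centralChooseConv n a (b + k) := by
  induction k using Int.induction_on generalizing a b with
  | zero => simp
  | succ k ih =>
    push_cast at ih ⊢
    rw [← add_assoc, centralChooseConv_add_one_left, ih, add_right_comm, add_assoc]
  | pred k ih =>
    have h := centralChooseConv_add_one_left n (a + (-k - 1 : ℤ)) (b - 1)
    push_cast at ih h ⊢
    rw [sub_add_cancel] at h
    rw [← h, show a + (-k - 1) + 1 = a + -k by ring, ih]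
    congr 1
    ring

theorem centralChooseConv_zero_zero (n : ℕ) : centralChooseConv n (0 : R) 0 = 4 ^ n := by
  have hcb (i : ℕ) : Ring.choose (2 * (i : R)) i = i.centralBinom := by
    rw [← Nat.cast_ofNat, ← Nat.cast_mul, Ring.choose_natCast, Nat.centralBinom_eq_two_mul_choose]
  simp only [centralChooseConv, add_zero, hcb]
  exact_mod_cast congrArg (Nat.cast (R := R)) (Nat.sum_centralBinom_mul_centralBinom n)

end CentralChooseConv

theorem sum_gen_binom_eq_four_pow_of_int_general (n : ℕ) (ℓ : ℤ) :
    ∑ i ∈ Finset.range (n + 1),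
      rchoose (2 * (i : ℝ) - (ℓ : ℝ)) i * rchoose (2 * ((n - i : ℕ) : ℝ) + (ℓ : ℝ)) (n - i)
      = 4 ^ n := by
  have key := centralChooseConv_add_intCast n (-(ℓ : ℝ)) 0 ℓ
  rw [neg_add_cancel, zero_add, centralChooseConv_zero_zero, centralChooseConv,
    Nat.sum_antidiagonal_eq_sum_range_succ
      (fun i j => Ring.choose (2 * (i : ℝ) + -ℓ) i * Ring.choose (2 * (j : ℝ) + ℓ) j)] at key
  simpa only [rchoose_eq_choose, sub_eq_add_neg] using key.symm

theorem sum_gen_binom_eq_four_pow_of_int (n : ℕ) (ℓ : ℤ) (hℓ : (2 * n : ℤ) < ℓ) :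
    ∑ i ∈ Finset.range (n + 1),
      rchoose (2 * (i : ℝ) - (ℓ : ℝ)) i * rchoose (2 * ((n - i : ℕ) : ℝ) + (ℓ : ℝ)) (n - i)
      = 4 ^ n :=
  sum_gen_binom_eq_four_pow_of_int_general n ℓ
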